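/- Let a ∈ H_R with a[0] = 1 over a commutative ℚ-algebra R, and write p_n^{(a)}(x) = ∑_{j=0}^{n} c_j x^j for the binomial-type polynomials associated to a. Then c_j = ∑_{h=0}^{n-j} (-1)^h (n!/(h+j)!) s(h+j, j) B_{n, h+j}(a_1, ..., a_{n-h-j+1}), where s(k,j) are unsigned Stirling numbers of the first kind and B_{n,k} are partial ordinary Bell polynomials. -/

import Mathlib

/-- The partial ordinary Bell polynomials `B_{n,k}(x_1, x_2, ...)`, defined by
`(∑_{m ≥ 1} x_m z^m)^k = ∑_{n ≥ k} B_{n,k} z^n`. -/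
noncomputable def obell {R : Type*} [CommRing R] (x : ℕ → R) (n k : ℕ) : R :=
  PowerSeries.coeff (R := R) n ((PowerSeries.mk fun m => if m = 0 then 0 else x m) ^ k)

/-- The exponential generating function of a sequence, over a `ℚ`-algebra. -/
noncomputable def egf {R : Type*} [CommRing R] [Algebra ℚ R] (a : ℕ → R) : PowerSeries R :=
  PowerSeries.mk fun n => algebraMap ℚ R (1 / n.factorial) * a n

/-- The binomial coefficient polynomial `C(x,k) = x(x-1)⋯(x-k+1)/k!`. -/
noncomputable def binomPoly {R : Type*} [CommRing R] [Algebra ℚ R] (k : ℕ) : Polynomial R :=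
  Polynomial.C (algebraMap ℚ R (1 / k.factorial)) *
    ∏ i ∈ Finset.range k, (Polynomial.X - (i : Polynomial R))

/-- The binomial-type polynomial sequence `p_n^{(a)}(x)`, the coefficients (times `n!`)
of `(A(t))^x = ∑_k C(x,k) (A(t)-1)^k`. -/
noncomputable def paseq {R : Type*} [CommRing R] [Algebra ℚ R] (a : ℕ → R) (n : ℕ) :
    Polynomial R :=
  (n.factorial : Polynomial R) *
    PowerSeries.coeff (R := Polynomial R) n
      (∑ k ∈ Finset.range (n + 1),
        PowerSeries.C (R := Polynomial R) (binomPoly k) *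
          (PowerSeries.map (Polynomial.C) (egf a) - 1) ^ k)

/-- Unsigned Stirling numbers of the first kind. -/
def S1 : ℕ → ℕ → ℕ
  | 0, 0 => 1
  | 0, _ + 1 => 0
  | _ + 1, 0 => 0
  | n + 1, k + 1 => n * S1 n (k + 1) + S1 n k

/-! `binomPoly k` is `descPochhammer k / k!`, and the coefficients of the falling factorial are
signed Stirling numbers of the first kind. Since `a 0 = 1`, the series `egf a - 1` has no constant
term, so the `n`-th coefficient of `(egf a - 1) ^ k` is the partial Bell polynomial `B_{n,k}`.
Multiplying out, the terms with `k < j` vanish, and `k = h + j` gives the stated sum. -/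

open Polynomial Finset

theorem S1_eq_stirlingFirst : ∀ n k : ℕ, S1 n k = Nat.stirlingFirst n k
  | 0, 0 => rfl
  | 0, _ + 1 => rfl
  | _ + 1, 0 => rfl
  | n + 1, k + 1 => by
    rw [S1, Nat.stirlingFirst_succ_succ, S1_eq_stirlingFirst n (k + 1), S1_eq_stirlingFirst n k]

theorem prod_range_X_sub_natCast_eq_descPochhammer (R : Type*) [CommRing R] (k : ℕ) :
    ∏ i ∈ range k, (X - (i : R[X])) = descPochhammer R k := by
  induction k with
  | zero => simp
  | succ k ih => rw [prod_range_succ, ih, descPochhammer_succ_right]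

-- The sign `(-1) ^ (k + j)` equals `(-1) ^ (k - j)` wherever the Stirling number is nonzero,
-- and avoids truncated subtraction.
theorem coeff_descPochhammer (R : Type*) [Ring R] (k j : ℕ) :
    (descPochhammer R k).coeff j = (-1) ^ (k + j) * (Nat.stirlingFirst k j : R) := by
  induction k generalizing j with
  | zero => cases j <;> simp [coeff_one]
  | succ k ih =>
    rw [descPochhammer_succ_right, mul_sub, coeff_sub, ← C_eq_natCast, coeff_mul_C]
    cases j with
    | zero => cases k <;> simp [ih]
    | succ j =>
      rw [coeff_mul_X, ih, ih, Nat.stirlingFirst_succ_succ, Nat.cast_add, Nat.cast_mul,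
        (Nat.cast_commute k _).eq, add_right_comm k 1, ← add_assoc, pow_succ, pow_succ, pow_succ]
      simp only [mul_neg_one, neg_neg, neg_mul, mul_add, mul_assoc]
      abel

section BinomialType

variable {R : Type*} [CommRing R] [Algebra ℚ R]

theorem coeff_binomPoly (k j : ℕ) :
    (binomPoly k : R[X]).coeff j =
      algebraMap ℚ R (1 / k.factorial) * ((-1) ^ (k + j) * (S1 k j : R)) := by
  rw [binomPoly, prod_range_X_sub_natCast_eq_descPochhammer, coeff_C_mul, coeff_descPochhammer,
    S1_eq_stirlingFirst]

theorem coeff_paseq (a : ℕ → R) (n j : ℕ) :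
    (paseq a n).coeff j =
      ∑ k ∈ range (n + 1), (n.factorial : R) * (binomPoly k : R[X]).coeff j *
        PowerSeries.coeff n ((egf a - 1) ^ k) := by
  simp only [paseq, ← C_eq_natCast, coeff_C_mul, map_sum, PowerSeries.coeff_C_mul,
    ← map_one (PowerSeries.map (C : R →+* R[X])), ← map_sub, ← map_pow, PowerSeries.coeff_map,
    finsetSum_coeff, coeff_mul_C, mul_sum, mul_assoc]

theorem egf_sub_one {a : ℕ → R} (ha : a 0 = 1) :
    egf a - 1 =
      PowerSeries.mk fun m => if m = 0 then 0 else algebraMap ℚ R (1 / m.factorial) * a m := by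
  ext (_ | m) <;> simp [egf, ha]

end BinomialType

/-- Closed form for the coefficients of the binomial-type polynomials
`p_n^{(a)}(x) = ∑_j c_j x^j`. -/
theorem paseq_coeff {R : Type*} [CommRing R] [Algebra ℚ R] (a : ℕ → R) (ha : a 0 = 1)
    (n j : ℕ) (hj : j ≤ n) :
    (paseq a n).coeff j =
      ∑ h ∈ Finset.range (n - j + 1),
        (-1 : R) ^ h * algebraMap ℚ R (n.factorial / (h + j).factorial) * (S1 (h + j) j : R) *
          obell (fun m => algebraMap ℚ R (1 / m.factorial) * a m) n (h + j) := by
  have hvanish : ∀ k ∈ range j, (n.factorial : R) * (binomPoly k : R[X]).coeff j *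
      PowerSeries.coeff n ((egf a - 1) ^ k) = 0 := fun k hk => by
    rw [coeff_binomPoly, S1_eq_stirlingFirst, Nat.stirlingFirst_eq_zero_of_lt (mem_range.1 hk)]
    simp
  rw [coeff_paseq, show n + 1 = j + (n - j + 1) by omega, sum_range_add, sum_eq_zero hvanish,
    zero_add, egf_sub_one ha]
  refine sum_congr rfl fun h _ => ?_
  rw [coeff_binomPoly, add_comm j h, add_assoc, ← two_mul, pow_add, pow_mul, neg_one_sq, one_pow,
    mul_one, div_eq_mul_one_div (n.factorial : ℚ), map_mul, map_natCast, obell]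
  ring
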